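/- Let ω ∈ ℝ³ with θ := ‖ω‖ > 0, and let ω̂ denote its hat matrix. Then the matrix exponential satisfies Rodrigues' formula: exp(ω̂) = I + (sin θ / θ)·ω̂ + ((1 − cos θ)/θ²)·ω̂². -/

import Mathlib

open Matrix

/-- The hat map `ℝ³ → 𝔰𝔬(3)`, sending `ω` to the skew-symmetric matrix `ω̂`
with `ω̂ v = ω × v`. -/
def hat (ω : EuclideanSpace ℝ (Fin 3)) : Matrix (Fin 3) (Fin 3) ℝ :=
  !![0, -ω 2, ω 1; ω 2, 0, -ω 0; -ω 1, ω 0, 0]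

/-!
Since `ω̂³ = -θ² ω̂`, every power `ω̂ⁿ` with `n ≥ 1` is `±θ^(2k)` times `ω̂` (n odd) or `ω̂²`
(n even). Splitting the exponential series by parity, the odd terms sum to `(sin θ / θ) ω̂` and the
even terms after the constant one to `((1 - cos θ) / θ²) ω̂²`.
-/

open scoped Nat

theorem Real.hasSum_one_sub_cos (θ : ℝ) :
    HasSum (fun k : ℕ => (-1) ^ k * θ ^ (2 * k + 2) / (2 * k + 2)!) (1 - Real.cos θ) := by
  have hcos_tail := (hasSum_nat_add_iff' 1).mpr (Real.hasSum_cos θ)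
  simpa [pow_succ, mul_add, ← neg_div] using hcos_tail.neg

section CubicRelation

variable {𝔸 : Type*} [Ring 𝔸] [Algebra ℝ 𝔸] {A : 𝔸} {θ : ℝ}

theorem pow_two_mul_add_one_of_pow_three (hA : A ^ 3 = -(θ ^ 2 • A)) (k : ℕ) :
    A ^ (2 * k + 1) = ((-1) ^ k * θ ^ (2 * k)) • A := by
  induction k with
  | zero => simp
  | succ k ih =>
    calc A ^ (2 * (k + 1) + 1) = A ^ (2 * k + 1) * A ^ 2 := by rw [← pow_add]; ring_nf
      _ = ((-1) ^ k * θ ^ (2 * k)) • A ^ 3 := by rw [ih, smul_mul_assoc, ← pow_succ']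
      _ = ((-1) ^ (k + 1) * θ ^ (2 * (k + 1))) • A := by
        rw [hA, smul_neg, smul_smul, ← neg_smul]; ring_nf

theorem pow_two_mul_add_two_of_pow_three (hA : A ^ 3 = -(θ ^ 2 • A)) (k : ℕ) :
    A ^ (2 * k + 2) = ((-1) ^ k * θ ^ (2 * k)) • A ^ 2 := by
  rw [pow_succ, pow_two_mul_add_one_of_pow_three hA, smul_mul_assoc, ← sq]

variable [TopologicalSpace 𝔸] [ContinuousSMul ℝ 𝔸]

theorem hasSum_expSeries_odd_of_pow_three (hA : A ^ 3 = -(θ ^ 2 • A)) (hθ : θ ≠ 0) :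
    HasSum (fun k : ℕ => ((2 * k + 1)! : ℝ)⁻¹ • A ^ (2 * k + 1)) ((Real.sin θ / θ) • A) := by
  convert ((Real.hasSum_sin θ).div_const θ).smul_const A using 2 with k
  rw [pow_two_mul_add_one_of_pow_three hA, smul_smul]
  congr 1
  field_simp
  ring

theorem hasSum_expSeries_even_succ_of_pow_three (hA : A ^ 3 = -(θ ^ 2 • A)) (hθ : θ ≠ 0) :
    HasSum (fun k : ℕ => ((2 * k + 2)! : ℝ)⁻¹ • A ^ (2 * k + 2))
      (((1 - Real.cos θ) / θ ^ 2) • A ^ 2) := by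
  convert ((Real.hasSum_one_sub_cos θ).div_const (θ ^ 2)).smul_const (A ^ 2) using 2 with k
  rw [pow_two_mul_add_two_of_pow_three hA, smul_smul]
  congr 1
  field_simp
  ring

theorem exp_eq_of_pow_three [IsTopologicalRing 𝔸] [T2Space 𝔸] (hA : A ^ 3 = -(θ ^ 2 • A))
    (hθ : θ ≠ 0) :
    NormedSpace.exp A = 1 + (Real.sin θ / θ) • A + ((1 - Real.cos θ) / θ ^ 2) • A ^ 2 := by
  have hsucc := HasSum.even_add_odd (f := fun n : ℕ => ((n + 1)! : ℝ)⁻¹ • A ^ (n + 1))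
    (hasSum_expSeries_odd_of_pow_three hA hθ) (hasSum_expSeries_even_succ_of_pow_three hA hθ)
  have hexp := HasSum.zero_add (f := fun n : ℕ => (n ! : ℝ)⁻¹ • A ^ n) hsucc
  rw [NormedSpace.exp_eq_tsum ℝ, add_assoc]
  simpa using hexp.tsum_eq

end CubicRelation

theorem EuclideanSpace.norm_sq_eq_fin_three (ω : EuclideanSpace ℝ (Fin 3)) :
    ‖ω‖ ^ 2 = ω 0 ^ 2 + ω 1 ^ 2 + ω 2 ^ 2 := by
  simp [EuclideanSpace.norm_sq_eq, Fin.sum_univ_three]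

theorem hat_pow_three (ω : EuclideanSpace ℝ (Fin 3)) : hat ω ^ 3 = -(‖ω‖ ^ 2 • hat ω) := by
  rw [EuclideanSpace.norm_sq_eq_fin_three]
  ext i j
  fin_cases i <;> fin_cases j <;>
    simp [hat, pow_succ, Matrix.mul_apply, Fin.sum_univ_three] <;> ring

/-- Rodrigues' formula: for `ω ∈ ℝ³` with `θ = ‖ω‖ > 0`,
`exp(ω̂) = I + (sin θ/θ)·ω̂ + ((1 − cos θ)/θ²)·ω̂²`. -/
theorem rodrigues_formula (ω : EuclideanSpace ℝ (Fin 3)) (hω : 0 < ‖ω‖) :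
    NormedSpace.exp (hat ω) =
      1 + (Real.sin ‖ω‖ / ‖ω‖) • hat ω +
        ((1 - Real.cos ‖ω‖) / ‖ω‖ ^ 2) • (hat ω * hat ω) := by
  rw [← sq]
  exact exp_eq_of_pow_three (hat_pow_three ω) hω.ne'
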